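/- arXiv:2411.06517 — 7 statements merged into one kernel-verified Lean document; each statement's English description precedes it below -/
import Mathlib

section
/- Robbins's refinement of Stirling's formula: for every n ∈ ℕ with n ≥ 1, √(2πn) (n/e)^n e^{1/(12n+1)} ≤ n! ≤ √(2πn) (n/e)^n e^{1/(12n)}. -/
/-!
The Stirling sequence `sₙ = n! / (√(2n) (n/e)ⁿ)` tends to `√π`, and
`log sₙ - log sₙ₊₁ = ∑_{k ≥ 1} t^{2k} / (2k + 1)` with `t = 1 / (2n + 1)`. Dominating the series by a
geometric one gives `log sₙ - log sₙ₊₁ ≤ 1/(12n) - 1/(12(n+1))`, and keeping only its first term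
gives `log sₙ - log sₙ₊₁ ≥ 1/(12n+1) - 1/(12(n+1)+1)`. Hence `log sₙ - 1/(12n)` increases and
`log sₙ - 1/(12n+1)` decreases, both to `log √π`.
-/

open Filter Topology Real Nat

section Telescoping

variable {α : Type*} [AddCommGroup α] [LinearOrder α] [IsOrderedAddMonoid α] [TopologicalSpace α]
  [OrderClosedTopology α] [IsTopologicalAddGroup α] {a f : ℕ → α} {L : α}

theorem Filter.Tendsto.le_add_of_sub_succ_le (ha : Tendsto a atTop (𝓝 L))
    (hf : Tendsto f atTop (𝓝 0)) (h : ∀ n, a n - a (n + 1) ≤ f n - f (n + 1)) (n : ℕ) :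
    a n ≤ L + f n := by
  have hmono : Monotone (a - f) := monotone_nat_of_le_succ fun k => by
    rw [Pi.sub_apply, Pi.sub_apply, sub_le_sub_iff, add_comm (a (k + 1))]
    exact sub_le_sub_iff.mp (h k)
  have := hmono.ge_of_tendsto (ha.sub hf) n
  rwa [sub_zero, Pi.sub_apply, sub_le_iff_le_add] at this

theorem Filter.Tendsto.add_le_of_sub_succ_le (ha : Tendsto a atTop (𝓝 L))
    (hf : Tendsto f atTop (𝓝 0)) (h : ∀ n, f n - f (n + 1) ≤ a n - a (n + 1)) (n : ℕ) :
    L + f n ≤ a n := by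
  have := ha.neg.le_add_of_sub_succ_le (f := fun k => -f k) (by simpa using hf.neg)
    (fun k => by simpa only [neg_sub_neg, neg_sub] using neg_le_neg (h k)) n
  rwa [← neg_add, neg_le_neg_iff] at this

end Telescoping

theorem tendsto_one_div_mul_natCast_add_one_add {a : ℝ} (ha : 0 < a) (c : ℝ) :
    Tendsto (fun n : ℕ => 1 / (a * (n + 1) + c)) atTop (𝓝 0) :=
  tendsto_const_nhds.div_atTop <| tendsto_atTop_add_const_right _ _ <|
    (tendsto_natCast_atTop_atTop.atTop_add tendsto_const_nhds).const_mul_atTop ha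

namespace Stirling

theorem one_div_three_mul_sq_le_log_stirlingSeq_sdiff {n : ℕ} (hn : n ≠ 0) :
    1 / (3 * (2 * n + 1) ^ 2) ≤ log (stirlingSeq n) - log (stirlingSeq (n + 1)) := by
  obtain ⟨m, rfl⟩ := exists_eq_add_one_of_ne_zero hn
  refine (le_hasSum (log_stirlingSeq_sdiff_hasSum m) 0 (fun j _ => by positivity)).trans_eq' ?_
  push_cast
  field_simp
  ring

theorem sub_le_log_stirlingSeq_sdiff {n : ℕ} (hn : n ≠ 0) :
    1 / (12 * n + 1) - 1 / (12 * (n + 1) + 1) ≤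
      log (stirlingSeq n) - log (stirlingSeq (n + 1)) := by
  refine le_trans ?_ (one_div_three_mul_sq_le_log_stirlingSeq_sdiff hn)
  have hn : (1 : ℝ) ≤ n := by exact_mod_cast one_le_iff_ne_zero.mpr hn
  rw [div_sub_div _ _ (by positivity) (by positivity),
    div_le_div_iff₀ (by positivity) (by positivity)]
  nlinarith

theorem log_stirlingSeq_sdiff_le_sub {n : ℕ} (hn : n ≠ 0) :
    log (stirlingSeq n) - log (stirlingSeq (n + 1)) ≤ 1 / (12 * n) - 1 / (12 * (n + 1)) := by
  convert log_stirlingSeq_sdiff_le n using 1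
  field_simp
  ring

theorem tendsto_log_stirlingSeq_succ :
    Tendsto (fun n => log (stirlingSeq (n + 1))) atTop (𝓝 (log √π)) :=
  ((continuousAt_log (by positivity)).tendsto).comp
    (tendsto_stirlingSeq_sqrt_pi.comp (tendsto_add_atTop_nat 1))

theorem sqrt_pi_mul_exp_le_stirlingSeq {n : ℕ} (hn : n ≠ 0) :
    √π * exp (1 / (12 * n + 1)) ≤ stirlingSeq n := by
  obtain ⟨m, rfl⟩ := exists_eq_add_one_of_ne_zero hn
  have key := tendsto_log_stirlingSeq_succ.add_le_of_sub_succ_le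
    (tendsto_one_div_mul_natCast_add_one_add (by norm_num : (0 : ℝ) < 12) 1)
    (fun k => by exact_mod_cast sub_le_log_stirlingSeq_sdiff k.succ_ne_zero) m
  rw [le_log_iff_exp_le (stirlingSeq'_pos m), exp_add, exp_log (by positivity)] at key
  exact_mod_cast key

theorem stirlingSeq_le_sqrt_pi_mul_exp {n : ℕ} (hn : n ≠ 0) :
    stirlingSeq n ≤ √π * exp (1 / (12 * n)) := by
  obtain ⟨m, rfl⟩ := exists_eq_add_one_of_ne_zero hn
  have key := tendsto_log_stirlingSeq_succ.le_add_of_sub_succ_le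
    (tendsto_one_div_mul_natCast_add_one_add (by norm_num : (0 : ℝ) < 12) 0)
    (fun k => by exact_mod_cast log_stirlingSeq_sdiff_le_sub k.succ_ne_zero) m
  rw [log_le_iff_le_exp (stirlingSeq'_pos m), exp_add, exp_log (by positivity)] at key
  exact_mod_cast key

theorem stirlingSeq_eq_sqrt_pi_mul (n : ℕ) :
    stirlingSeq n = √π * (n ! / (√(2 * π * n) * (n / exp 1) ^ n)) := by
  rw [stirlingSeq, show (2 * π * n : ℝ) = π * (2 * n) by ring, sqrt_mul pi_pos.le]
  field_simp

end Stirling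

theorem robbins_stirling (n : ℕ) (hn : 1 ≤ n) :
    Real.sqrt (2 * Real.pi * n) * ((n : ℝ) / Real.exp 1) ^ n
        * Real.exp (1 / (12 * n + 1)) ≤ (n.factorial : ℝ) ∧
    (n.factorial : ℝ) ≤ Real.sqrt (2 * Real.pi * n) * ((n : ℝ) / Real.exp 1) ^ n
        * Real.exp (1 / (12 * n)) := by
  have hn : n ≠ 0 := one_le_iff_ne_zero.mp hn
  have hD : 0 < √(2 * π * n) * ((n : ℝ) / exp 1) ^ n := by positivity
  have lower := Stirling.sqrt_pi_mul_exp_le_stirlingSeq hn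
  have upper := Stirling.stirlingSeq_le_sqrt_pi_mul_exp hn
  rw [Stirling.stirlingSeq_eq_sqrt_pi_mul] at lower upper
  constructor
  · rw [mul_comm, ← le_div_iff₀ hD]
    exact le_of_mul_le_mul_left lower (by positivity)
  · rw [mul_comm _ (exp _), ← div_le_iff₀ hD]
    exact le_of_mul_le_mul_left upper (by positivity)
end

section
/- Let A ⊆ ℕ be a finite set, let b ∈ ℕ and a ∈ ℝ with 0 < a ≤ b ≤ min A, let d ≥ 2 be an integer, and let Φ : [a, ∞) → (0, ∞) be a decreasing function. Then Σ_{j,k ∈ A, j<k} Φ(k^d − j^d) ≤ Σ_{b ≤ j < k ≤ b+|A|−1} Φ(k^d − j^d). -/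
private lemma key_shift (x y m : ℝ) (hx : 0 ≤ x) (hxy : x ≤ y) (hm : 0 ≤ m) (d : ℕ) :
    (x + m) ^ d - x ^ d ≤ (y + m) ^ d - y ^ d := by
  have hx' : (x + m) ^ d = ∑ i ∈ Finset.range (d + 1), x ^ i * m ^ (d - i) * (d.choose i) :=
    add_pow x m d
  have hy' : (y + m) ^ d = ∑ i ∈ Finset.range (d + 1), y ^ i * m ^ (d - i) * (d.choose i) :=
    add_pow y m d
  have hsub : (y + m) ^ d - (x + m) ^ d
      = ∑ i ∈ Finset.range (d + 1), (y ^ i - x ^ i) * m ^ (d - i) * (d.choose i) := by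
    rw [hx', hy', ← Finset.sum_sub_distrib]
    congr 1; ext i; ring
  rw [Finset.sum_range_succ] at hsub
  simp only [Nat.sub_self, pow_zero, Nat.choose_self, Nat.cast_one, mul_one] at hsub
  have hnn : 0 ≤ ∑ i ∈ Finset.range d, (y ^ i - x ^ i) * m ^ (d - i) * (d.choose i) := by
    apply Finset.sum_nonneg
    intro i _
    have h1 : 0 ≤ y ^ i - x ^ i := sub_nonneg.mpr (pow_le_pow_left₀ hx hxy i)
    positivity
  linarith

private lemma smono_add {n : ℕ} (f : Fin n → ℕ) (hf : StrictMono f) :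
    ∀ (m : ℕ) (j k : Fin n), j.val + m = k.val → f j + m ≤ f k := by
  intro m
  induction m with
  | zero => intro j k h; have hjk : j = k := Fin.ext (by omega); subst hjk; omega
  | succ m ih =>
    intro j k h
    have hk : j.val + m < n := by omega
    have h1 := ih j ⟨j.val + m, hk⟩ rfl
    have h2 : f ⟨j.val + m, hk⟩ < f k := hf (by simp [Fin.lt_def]; omega)
    omega

theorem sum_decreasing_translate (A : Finset ℕ) (hA : A.Nonempty)
    (a : ℝ) (b : ℕ) (ha : 0 < a) (hab : a ≤ b) (hb : b ≤ A.min' hA)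
    (d : ℕ) (hd : 2 ≤ d) (Φ : ℝ → ℝ)
    (hΦpos : ∀ x, a ≤ x → 0 < Φ x)
    (hΦdec : ∀ x y, a ≤ x → x ≤ y → Φ y ≤ Φ x) :
    ∑ j ∈ A, ∑ k ∈ A, (if j < k then Φ ((k : ℝ) ^ d - (j : ℝ) ^ d) else 0)
      ≤ ∑ j ∈ Finset.Icc b (b + A.card - 1), ∑ k ∈ Finset.Icc b (b + A.card - 1),
          (if j < k then Φ ((k : ℝ) ^ d - (j : ℝ) ^ d) else 0) := by
  set n := A.card with hn
  have hn0 : 0 < n := Finset.card_pos.mpr hA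
  set e : Fin n ↪o ℕ := A.orderEmbOfFin hn.symm with he
  have hemem : ∀ i, e i ∈ A := fun i => A.orderEmbOfFin_mem hn.symm i
  have hemono : StrictMono e := e.strictMono
  -- b + i ≤ e i
  have hbi : ∀ i : Fin n, b + i.val ≤ e i := by
    intro i
    have h0 : e ⟨0, hn0⟩ = A.min' hA := Finset.orderEmbOfFin_zero hn.symm hn0
    have h1 := smono_add e hemono i.val ⟨0, hn0⟩ i (by simp)
    rw [h0] at h1
    omega
  -- relative gap
  have hgap : ∀ j k : Fin n, j < k → e j + (k.val - j.val) ≤ e k := by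
    intro j k hjk
    exact smono_add e hemono (k.val - j.val) j k (by omega)
  -- reindex LHS
  have hAimg : Finset.image (fun i : Fin n => e i) Finset.univ = A := by
    apply Finset.coe_injective
    rw [Finset.coe_image, Finset.coe_univ, Set.image_univ]
    exact A.range_orderEmbOfFin hn.symm
  have hIimg : Finset.image (fun i : Fin n => b + i.val) Finset.univ
      = Finset.Icc b (b + n - 1) := by
    ext x
    simp only [Finset.mem_image, Finset.mem_univ, true_and, Finset.mem_Icc]
    constructor
    · rintro ⟨i, rfl⟩; have := i.isLt; omega
    · rintro ⟨h1, h2⟩; exact ⟨⟨x - b, by omega⟩, by show b + (x - b) = x; omega⟩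
  have hinj1 : ∀ x ∈ (Finset.univ : Finset (Fin n)), ∀ y ∈ Finset.univ,
      e x = e y → x = y := fun x _ y _ h => hemono.injective h
  have hinj2 : ∀ x ∈ (Finset.univ : Finset (Fin n)), ∀ y ∈ Finset.univ,
      b + x.val = b + y.val → x = y := fun x _ y _ h => Fin.ext (by omega)
  calc
    ∑ j ∈ A, ∑ k ∈ A, (if j < k then Φ ((k : ℝ) ^ d - (j : ℝ) ^ d) else 0)
        = ∑ i : Fin n, ∑ j : Fin n,
            (if e i < e j then Φ ((e j : ℝ) ^ d - (e i : ℝ) ^ d) else 0) := by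
          rw [← hAimg, Finset.sum_image hinj1]
          refine Finset.sum_congr rfl fun i _ => ?_
          rw [Finset.sum_image hinj1]
    _ ≤ ∑ i : Fin n, ∑ j : Fin n,
            (if b + i.val < b + j.val then
              Φ (((b + j.val : ℕ) : ℝ) ^ d - ((b + i.val : ℕ) : ℝ) ^ d) else 0) := by
          apply Finset.sum_le_sum
          intro i _
          apply Finset.sum_le_sum
          intro j _
          by_cases hij : i < j
          · have h1 : e i < e j := hemono hij
            have hij' : i.val < j.val := hij
            have h2 : b + i.val < b + j.val := by omega
            rw [if_pos h1, if_pos h2]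
            -- real inequalities
            have hb1 : 1 ≤ b := by
              by_contra h
              have : b = 0 := by omega
              rw [this] at hab; simp at hab; linarith
            set u : ℕ := b + i.val
            set v : ℕ := b + j.val
            have huv : u + 1 ≤ v := by omega
            have hue : u ≤ e i := hbi i
            have hve : e i + (v - u) ≤ e j := by
              have := hgap i j hij
              have : e i + (j.val - i.val) ≤ e j := this
              omega
            -- lower bound a ≤ v^d - u^d
            have hnat : u ^ d + u ≤ v ^ d := by
              have h1 : u ^ d + u ≤ (u + 1) ^ d := by
                have hu1 : 1 ≤ u := by omega
                have : (u + 1) * u ^ (d - 1) ≤ (u + 1) ^ d := by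
                  calc (u + 1) * u ^ (d-1) ≤ (u + 1) * (u+1) ^ (d-1) :=
                        Nat.mul_le_mul_left _ (Nat.pow_le_pow_left (by omega) _)
                    _ = (u + 1) ^ d := by
                        rw [← pow_succ']
                        congr 1; omega
                have h2 : u ≤ u ^ (d - 1) := by
                  calc u = u ^ 1 := (pow_one u).symm
                    _ ≤ u ^ (d - 1) := Nat.pow_le_pow_right hu1 (by omega)
                have h3 : (u+1) * u ^ (d-1) = u ^ d + u ^ (d-1) := by
                  rw [add_mul, one_mul, ← pow_succ']
                  congr 2; omega
                omega
              calc u ^ d + u ≤ (u + 1) ^ d := h1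
                _ ≤ v ^ d := Nat.pow_le_pow_left huv d
            have hlow : a ≤ ((v : ℝ)) ^ d - ((u : ℝ)) ^ d := by
              have : (u : ℝ) ^ d + u ≤ (v : ℝ) ^ d := by
                exact_mod_cast hnat
              have hbu : (b : ℝ) ≤ u := by exact_mod_cast Nat.le_add_right b i.val
              linarith
            -- v^d - u^d ≤ (e j)^d - (e i)^d
            have hupper : ((v : ℝ)) ^ d - ((u : ℝ)) ^ d
                ≤ ((e j : ℕ) : ℝ) ^ d - ((e i : ℕ) : ℝ) ^ d := by
              set m : ℕ := v - u
              have hvum : (v : ℝ) = (u : ℝ) + m := by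
                have : v = u + m := by omega
                exact_mod_cast this
              have h1 : ((u : ℝ) + m) ^ d - (u : ℝ) ^ d
                  ≤ (((e i : ℕ) : ℝ) + m) ^ d - ((e i : ℕ) : ℝ) ^ d :=
                key_shift u (e i) m (by positivity) (by exact_mod_cast hue)
                  (by positivity) d
              have h2 : (((e i : ℕ) : ℝ) + m) ^ d ≤ ((e j : ℕ) : ℝ) ^ d := by
                apply pow_le_pow_left₀ (by positivity)
                have : ((e i : ℕ) + m : ℕ) ≤ (e j : ℕ) := hve
                exact_mod_cast this
              rw [hvum]; linarith
            exact hΦdec _ _ hlow hupper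
          · have h1 : ¬ (e i < e j) := fun h => hij (hemono.lt_iff_lt.mp h)
            have hij' : ¬ i.val < j.val := fun h => hij h
            have h2 : ¬ (b + i.val < b + j.val) := by omega
            rw [if_neg h1, if_neg h2]
    _ = ∑ j ∈ Finset.Icc b (b + n - 1), ∑ k ∈ Finset.Icc b (b + n - 1),
          (if j < k then Φ ((k : ℝ) ^ d - (j : ℝ) ^ d) else 0) := by
          rw [← hIimg, Finset.sum_image hinj2]
          refine Finset.sum_congr rfl fun i _ => ?_
          rw [Finset.sum_image hinj2]
end

section
/- Let 1 ≤ C ≤ 10, y > e^{50}, and x ≥ 1. If |x − y| ≥ 2C√(x log x), then |x − y| ≥ C√(y log y). -/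
theorem far_implies_far (C x y : ℝ) (hC : 1 ≤ C) (hC' : C ≤ 10)
    (hy : Real.exp 50 < y) (hx : 1 ≤ x)
    (h : 2 * C * Real.sqrt (x * Real.log x) ≤ |x - y|) :
    C * Real.sqrt (y * Real.log y) ≤ |x - y| := by
  have hexp : (640000:ℝ) ≤ Real.exp 50 := by
    have h5 : (6:ℝ) ≤ Real.exp 5 := by
      have := Real.add_one_le_exp (5:ℝ); linarith
    have : Real.exp 50 = (Real.exp 5) ^ 10 := by
      rw [← Real.exp_nat_mul]; norm_num
    rw [this]
    calc (640000:ℝ) ≤ 6 ^ 10 := by norm_num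
      _ ≤ (Real.exp 5) ^ 10 := pow_le_pow_left₀ (by norm_num) h5 10
  have hy0 : (0:ℝ) < y := by linarith
  have hlog50 : (50:ℝ) ≤ Real.log y := by
    rw [Real.le_log_iff_exp_le hy0]; linarith
  have hlogy : (0:ℝ) < Real.log y := by linarith
  -- log y ≤ 2 * sqrt y
  have hsq : Real.log y ≤ 2 * Real.sqrt y := by
    have h1 : Real.log (Real.sqrt y) = Real.log y / 2 := Real.log_sqrt hy0.le
    have h2 : Real.log (Real.sqrt y) ≤ Real.sqrt y - 1 :=
      Real.log_le_sub_one_of_pos (Real.sqrt_pos.mpr hy0)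
    nlinarith [Real.sqrt_nonneg y]
  have hsqy : (800:ℝ) ≤ Real.sqrt y := by
    have : Real.sqrt 640000 ≤ Real.sqrt y := Real.sqrt_le_sqrt (by linarith)
    have h8 : Real.sqrt 640000 = 800 := by
      rw [show (640000:ℝ) = 800 ^ 2 by norm_num, Real.sqrt_sq (by norm_num)]
    linarith
  have h400 : 400 * Real.log y ≤ y := by
    have hyy : Real.sqrt y * Real.sqrt y = y := Real.mul_self_sqrt hy0.le
    nlinarith
  by_cases hcase : y / 2 ≤ x
  · -- x large: x log x ≥ y log y / 4
    have hx1 : (1:ℝ) < x := by nlinarith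
    have hlogx : Real.log y - 1 ≤ Real.log x := by
      have h2 : Real.log (y / 2) ≤ Real.log x := Real.log_le_log (by linarith) hcase
      have : Real.log (y / 2) = Real.log y - Real.log 2 := Real.log_div (by linarith) (by norm_num)
      have hl2 : Real.log 2 ≤ 1 := by
        have := Real.log_le_sub_one_of_pos (show (0:ℝ) < 2 by norm_num); linarith
      linarith
    have hlogx2 : Real.log y / 2 ≤ Real.log x := by linarith
    have hxl : 0 ≤ x * Real.log x := mul_nonneg (by linarith) (Real.log_nonneg hx1.le)
    have hkey : y * Real.log y ≤ 4 * (x * Real.log x) := by nlinarith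
    have : Real.sqrt (y * Real.log y) ≤ 2 * Real.sqrt (x * Real.log x) := by
      have := Real.sqrt_le_sqrt hkey
      rwa [show (4:ℝ) * (x * Real.log x) = (2 * Real.sqrt (x * Real.log x)) ^ 2 by
        rw [mul_pow, Real.sq_sqrt hxl]; ring,
        Real.sqrt_sq (by positivity)] at this
    nlinarith [Real.sqrt_nonneg (x * Real.log x), Real.sqrt_nonneg (y * Real.log y)]
  · -- x < y/2 so |x - y| = y - x ≥ y/2
    push_neg at hcase
    have habs : |x - y| = y - x := by
      rw [abs_sub_comm, abs_of_nonneg (by linarith)]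
    have hs : Real.sqrt (y * Real.log y) ≤ y / 20 := by
      have hle : y * Real.log y ≤ (y / 20) ^ 2 := by nlinarith
      have := Real.sqrt_le_sqrt hle
      rwa [Real.sqrt_sq (by positivity)] at this
    have : C * Real.sqrt (y * Real.log y) ≤ 10 * (y / 20) := by
      have h0 : 0 ≤ Real.sqrt (y * Real.log y) := Real.sqrt_nonneg _
      nlinarith
    rw [habs]; linarith
end

section
/- For an integer D ≥ 5, let Λ_{D,k} := { Σ_{j=0}^{k-1} d_j D^j : d_j ∈ {0,1,3} }. Then for every M ∈ ℕ and n ∈ ℤ, |Λ_{D,k} ∩ [n−M, n+M]| ≤ 24 M^{log 3 / log D}. -/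
lemma gr_geom (D : ℕ) (hD : 4 ≤ D) : ∀ ℓ : ℕ, 3 * ∑ j ∈ Finset.range ℓ, D ^ j < D ^ ℓ := by
  intro ℓ
  induction ℓ with
  | zero => simp
  | succ l ih =>
    rw [Finset.sum_range_succ, pow_succ]
    have h1 : 1 ≤ D ^ l := Nat.one_le_pow _ _ (by omega)
    nlinarith

theorem green_ruzsa_sparsity (D : ℕ) (hD : 5 ≤ D) (k : ℕ) (M : ℕ) (hM : 1 ≤ M) (n : ℤ) :
    (({m : ℤ | (∃ dig : Fin k → ℕ, (∀ j, dig j ∈ ({0, 1, 3} : Set ℕ)) ∧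
          m = ∑ j, (dig j : ℤ) * (D : ℤ) ^ (j : ℕ)) ∧
        n - M ≤ m ∧ m ≤ n + M}).ncard : ℝ)
      ≤ 24 * (M : ℝ) ^ (Real.log 3 / Real.log D) := by
  classical
  set α : ℝ := Real.log 3 / Real.log D with hα
  set S : Set ℤ := {m : ℤ | (∃ dig : Fin k → ℕ, (∀ j, dig j ∈ ({0, 1, 3} : Set ℕ)) ∧
          m = ∑ j, (dig j : ℤ) * (D : ℤ) ^ (j : ℕ)) ∧
        n - M ≤ m ∧ m ≤ n + M} with hSdef
  set L : ℕ := Nat.log D (8 * M) with hL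
  set ℓ : ℕ := L + 1 with hl
  have hDL : (8 * M : ℕ) < D ^ ℓ := Nat.lt_pow_succ_log_self (by omega) _
  have hDL' : D ^ L ≤ 8 * M := Nat.pow_log_le_self D (by omega)
  set P : ℤ := (D : ℤ) ^ ℓ with hP
  have hP0 : (0:ℤ) < P := by positivity
  set val : Fin 3 → ℕ := ![0, 1, 3] with hval
  set f : (Fin ℓ → Fin 3) → ℤ :=
    fun c => ∑ j : Fin ℓ, (val (c j) : ℤ) * (D : ℤ) ^ (j : ℕ) with hf
  -- Claim A : every element of S reduces mod P to an element of the image of f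
  have claimA : ∀ m ∈ S, m % P ∈ f '' Set.univ := by
    intro m hm
    obtain ⟨⟨dig, hdig, hmeq⟩, -, -⟩ := hm
    set code : ℕ → Fin 3 := fun d => if d = 1 then 1 else if d = 3 then 2 else 0 with hcode
    set c : Fin ℓ → Fin 3 := fun j => code (if h : (j:ℕ) < k then dig ⟨j, h⟩ else 0) with hc
    have hvc : ∀ j : Fin ℓ, (val (c j) : ℕ) = (if h : (j:ℕ) < k then dig ⟨j, h⟩ else 0) := by
      intro j
      by_cases h : (j:ℕ) < k
      · have := hdig ⟨j, h⟩
        simp only [Set.mem_insert_iff, Set.mem_singleton_iff] at this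
        rcases this with hh | hh | hh <;> simp [hc, hcode, hval, h, hh]
      · simp [hc, hcode, hval, h]
    set E : ℕ → ℤ := fun j => (if h : j < k then (dig ⟨j, h⟩ : ℤ) else 0) * (D : ℤ) ^ j with hE
    have h1 : m = ∑ j ∈ Finset.range k, E j := by
      rw [hmeq, Finset.sum_range]
      apply Finset.sum_congr rfl
      intro j _
      simp [hE, j.isLt]
    have h2 : m = ∑ j ∈ Finset.range (max k ℓ), E j := by
      rw [h1]
      apply Finset.sum_subset (Finset.range_subset_range.mpr (le_max_left k ℓ))
      intro x _ hx
      simp only [Finset.mem_range, not_lt] at hx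
      simp [hE, Nat.not_lt.mpr hx]
    have hfc : f c = ∑ j ∈ Finset.range ℓ, E j := by
      rw [hf, Finset.sum_range]
      apply Finset.sum_congr rfl
      intro j _
      have := hvc j
      simp only [hE]
      by_cases h : (j:ℕ) < k
      · rw [dif_pos h] at this ⊢
        rw [this]
      · rw [dif_neg h] at this ⊢
        rw [this]
        simp
    have hdvd : P ∣ m - f c := by
      have hsub : Finset.range ℓ ⊆ Finset.range (max k ℓ) :=
        Finset.range_subset_range.mpr (le_max_right k ℓ)
      have := Finset.sum_sdiff (f := E) hsub
      have hdiff : m - f c = ∑ j ∈ Finset.range (max k ℓ) \ Finset.range ℓ, E j := by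
        rw [h2, hfc, ← this]; ring
      rw [hdiff]
      apply Finset.dvd_sum
      intro x hx
      simp only [Finset.mem_sdiff, Finset.mem_range, not_lt] at hx
      have : P ∣ (D:ℤ) ^ x := pow_dvd_pow _ hx.2
      exact Dvd.dvd.mul_left this _
    have hfc0 : 0 ≤ f c := by
      rw [hf]
      apply Finset.sum_nonneg
      intro j _
      positivity
    have hfclt : f c < P := by
      have hgeom := gr_geom D (by omega) ℓ
      have hterm : ∀ j ∈ Finset.range ℓ, E j ≤ 3 * (D:ℤ) ^ j := by
        intro j hj
        simp only [hE]
        apply mul_le_mul_of_nonneg_right _ (by positivity)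
        by_cases h : j < k
        · rw [dif_pos h]
          have := hdig ⟨j, h⟩
          simp only [Set.mem_insert_iff, Set.mem_singleton_iff] at this
          rcases this with hh | hh | hh <;> simp [hh]
        · rw [dif_neg h]; norm_num
      calc f c = ∑ j ∈ Finset.range ℓ, E j := hfc
        _ ≤ ∑ j ∈ Finset.range ℓ, 3 * (D:ℤ) ^ j := Finset.sum_le_sum hterm
        _ = 3 * ∑ j ∈ Finset.range ℓ, (D:ℤ) ^ j := by rw [Finset.mul_sum]
        _ < P := by rw [hP]; exact_mod_cast hgeom
    have hmod : m % P = f c := by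
      have h3 : (m - f c) % P = 0 := Int.emod_eq_zero_of_dvd hdvd
      have h4 : m % P = f c % P := Int.emod_eq_emod_iff_emod_sub_eq_zero.mpr h3
      rw [h4, Int.emod_eq_of_lt hfc0 hfclt]
    exact ⟨c, Set.mem_univ c, hmod.symm⟩
  -- Claim B : reduction mod P is injective on S
  have claimB : Set.InjOn (· % P) S := by
    intro a ha b hb hab
    have hd : P ∣ a - b :=
      Int.dvd_of_emod_eq_zero (Int.emod_eq_emod_iff_emod_sub_eq_zero.mp hab)
    have hPM : (8 * M : ℤ) < P := by rw [hP]; exact_mod_cast hDL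
    obtain ⟨-, ha1, ha2⟩ := ha
    obtain ⟨-, hb1, hb2⟩ := hb
    have habs : |a - b| < P := by
      rw [abs_lt]
      constructor <;> [skip; skip] <;> push_cast at hPM ⊢ <;> omega
    have := Int.eq_zero_of_abs_lt_dvd hd habs
    omega
  -- Cardinality bound
  have hcard : S.ncard ≤ 3 ^ ℓ := by
    have h3 : S.ncard = ((· % P) '' S).ncard := (Set.ncard_image_of_injOn claimB).symm
    have h4 : ((· % P) '' S) ⊆ f '' Set.univ := by
      rintro _ ⟨m, hm, rfl⟩
      exact claimA m hm
    have h5 : (f '' Set.univ).ncard ≤ 3 ^ ℓ := by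
      have := Set.ncard_image_le (s := (Set.univ : Set (Fin ℓ → Fin 3))) (f := f)
        Set.finite_univ
      simpa [Set.ncard_univ, Nat.card_eq_fintype_card] using this
    rw [h3]
    exact le_trans (Set.ncard_le_ncard h4 (Set.finite_univ.image f)) h5
  -- Real arithmetic
  have hD1 : (1:ℝ) < (D:ℝ) := by exact_mod_cast (by omega : 1 < D)
  have hlogD : 0 < Real.log D := Real.log_pos hD1
  have hα0 : 0 ≤ α := div_nonneg (Real.log_nonneg (by norm_num)) hlogD.le
  have hα1 : α ≤ 1 := by
    rw [hα, div_le_one hlogD]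
    exact Real.log_le_log (by norm_num) (by exact_mod_cast (by omega : 3 ≤ D))
  have hD3 : (D:ℝ) ^ α = 3 := by
    have h : α = Real.logb D 3 := by rw [Real.logb]
    rw [h]
    exact Real.rpow_logb (by positivity) (by exact_mod_cast (by omega : D ≠ 1)) (by norm_num)
  have hM0 : (0:ℝ) ≤ (M:ℝ) := by positivity
  have h3L : (3:ℝ) ^ L ≤ 8 * (M:ℝ) ^ α := by
    have e1 : (3:ℝ) ^ L = ((D:ℝ) ^ (L:ℕ) : ℝ) ^ α := by
      rw [← hD3, ← Real.rpow_natCast ((D:ℝ) ^ α) L, ← Real.rpow_natCast (D:ℝ) L,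
        ← Real.rpow_mul (by positivity), ← Real.rpow_mul (by positivity), mul_comm]
    have e2 : ((D:ℝ) ^ (L:ℕ)) ^ α ≤ ((8 * M : ℝ)) ^ α := by
      apply Real.rpow_le_rpow (by positivity) _ hα0
      exact_mod_cast hDL'
    have e3 : ((8 * M : ℝ)) ^ α = (8:ℝ) ^ α * (M:ℝ) ^ α :=
      Real.mul_rpow (by norm_num) hM0
    have e4 : (8:ℝ) ^ α ≤ 8 := by
      calc (8:ℝ) ^ α ≤ (8:ℝ) ^ (1:ℝ) :=
            Real.rpow_le_rpow_of_exponent_le (by norm_num) hα1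
        _ = 8 := Real.rpow_one 8
    have hMα : (0:ℝ) ≤ (M:ℝ) ^ α := Real.rpow_nonneg hM0 _
    calc (3:ℝ) ^ L = ((D:ℝ) ^ (L:ℕ)) ^ α := e1
      _ ≤ (8:ℝ) ^ α * (M:ℝ) ^ α := by rw [← e3]; exact e2
      _ ≤ 8 * (M:ℝ) ^ α := mul_le_mul_of_nonneg_right e4 hMα
  calc (S.ncard : ℝ) ≤ (3:ℝ) ^ ℓ := by exact_mod_cast hcard
    _ = 3 * (3:ℝ) ^ L := by rw [hl, pow_succ]; ring
    _ ≤ 3 * (8 * (M:ℝ) ^ α) := by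
        apply mul_le_mul_of_nonneg_left h3L (by norm_num)
    _ = 24 * (M:ℝ) ^ α := by ring
end

section
/- Let d ≥ 3 be an integer and D ≥ 1 a real number. Then |{(j,k) ∈ ℕ² : 0 < k^d − j^d < 5D}| ≤ 16 D^{2/d}. -/
/-!
Write `D = T ^ d`. A point `(j, k)` of the region has `j < k`. If `j ≤ T` then
`k ^ d < 6 T ^ d`, so `k < 6 T`: these points lie in a `T × 6T` box. If `j > T`, Bernoulli's
inequality `k ^ d - j ^ d ≥ d j ^ (d - 1) (k - j)` together with `T ^ d ≤ j ^ (d - 3) T ^ 3`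
gives `k - j < 5 T ^ 3 / (3 j ^ 2)`, and summing over `j > T` with `∑_{j > T} j⁻² ≤ 2 / T`
bounds these points by `10/3 · T ^ 2`. Altogether there are at most `28/3 · T ^ 2` points.
-/

open Finset

def powDiffStrip (d : ℕ) (C : ℝ) : Set (ℕ × ℕ) :=
  {p | 0 < p.1 ∧ 0 < p.2 ∧ 0 < (p.2 : ℝ) ^ d - (p.1 : ℝ) ^ d ∧ (p.2 : ℝ) ^ d - (p.1 : ℝ) ^ d < C}

noncomputable def stripBox (T : ℝ) : Finset (ℕ × ℕ) := Icc 1 ⌊T⌋₊ ×ˢ Icc 1 ⌊6 * T⌋₊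

noncomputable def stripColumns (T : ℝ) : Finset (ℕ × ℕ) :=
  (Ioo ⌊T⌋₊ ⌈5 * T ^ 3⌉₊).biUnion fun j ↦ {j} ×ˢ Ioc j (j + ⌊5 * T ^ 3 / (3 * (j : ℝ) ^ 2)⌋₊)

section

variable {d : ℕ} {C T : ℝ} {j k : ℕ}

lemma lt_of_mem_powDiffStrip (h : (j, k) ∈ powDiffStrip d C) : j < k := by
  have hpow : (j : ℝ) ^ d < (k : ℝ) ^ d := sub_pos.mp h.2.2.1
  exact_mod_cast lt_of_pow_lt_pow_left₀ d k.cast_nonneg hpow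

lemma lt_six_mul_of_mem_powDiffStrip (hd : d ≠ 0) (hT : 0 ≤ T)
    (h : (j, k) ∈ powDiffStrip d (5 * T ^ d)) (hjT : (j : ℝ) ≤ T) : (k : ℝ) < 6 * T := by
  have hjd : (j : ℝ) ^ d ≤ T ^ d := pow_le_pow_left₀ j.cast_nonneg hjT d
  have h6 : (6 : ℝ) ≤ 6 ^ d := le_self_pow₀ (by norm_num) hd
  refine lt_of_pow_lt_pow_left₀ d (by positivity) ?_
  calc (k : ℝ) ^ d < (j : ℝ) ^ d + 5 * T ^ d := by linarith [h.2.2.2]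
    _ ≤ 6 * T ^ d := by linarith
    _ ≤ 6 ^ d * T ^ d := by gcongr
    _ = (6 * T) ^ d := (mul_pow _ _ _).symm

lemma sub_mul_sq_lt_of_mem_powDiffStrip (hd : 3 ≤ d) (hT : 0 ≤ T)
    (h : (j, k) ∈ powDiffStrip d (5 * T ^ d)) (hTj : T ≤ j) :
    ((k : ℝ) - j) * (3 * (j : ℝ) ^ 2) < 5 * T ^ 3 := by
  have hj : (0 : ℝ) < j := by exact_mod_cast h.1
  have hkj : (0 : ℝ) ≤ k - j := sub_nonneg.mpr (by exact_mod_cast (lt_of_mem_powDiffStrip h).le)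
  have bernoulli := pow_add_mul_le_add_pow (n := d) hj.le (by linarith : (0 : ℝ) ≤ 2 * j + (k - j))
  rw [add_sub_cancel] at bernoulli
  have hsplit : (j : ℝ) ^ (d - 1) = (j : ℝ) ^ (d - 3) * (j : ℝ) ^ 2 := by
    rw [← pow_add]; congr 1; omega
  have hTd : T ^ d ≤ (j : ℝ) ^ (d - 3) * T ^ 3 := by
    rw [← pow_sub_mul_pow T hd]
    gcongr
  have hd3 : (3 : ℝ) ≤ d := by exact_mod_cast hd
  refine lt_of_mul_lt_mul_left ?_ (pow_nonneg hj.le (d - 3))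
  calc (j : ℝ) ^ (d - 3) * (((k : ℝ) - j) * (3 * (j : ℝ) ^ 2))
      ≤ d * (j : ℝ) ^ (d - 1) * (k - j) := by
        rw [hsplit]
        have : 0 ≤ (j : ℝ) ^ (d - 3) * (j : ℝ) ^ 2 * (k - j) := by positivity
        nlinarith
    _ < 5 * T ^ d := by linarith [h.2.2.2]
    _ ≤ (j : ℝ) ^ (d - 3) * (5 * T ^ 3) := by linarith

lemma powDiffStrip_subset (hd : 3 ≤ d) (hT : 0 ≤ T) :
    powDiffStrip d (5 * T ^ d) ⊆ ↑(stripBox T ∪ stripColumns T) := by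
  rintro ⟨j, k⟩ h
  have hjk := lt_of_mem_powDiffStrip h
  simp only [coe_union, Set.mem_union, mem_coe, stripBox, stripColumns, mem_product, mem_Icc,
    mem_biUnion, mem_Ioo, mem_singleton, mem_Ioc]
  rcases le_or_gt (j : ℝ) T with hjT | hTj
  · have hk6 := lt_six_mul_of_mem_powDiffStrip (by omega) hT h hjT
    exact Or.inl ⟨⟨h.1, Nat.le_floor hjT⟩, h.2.1, Nat.le_floor hk6.le⟩
  · have key := sub_mul_sq_lt_of_mem_powDiffStrip hd hT h hTj.le
    have hj : (1 : ℝ) ≤ j := by exact_mod_cast h.1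
    have hkj : (1 : ℝ) ≤ k - j := by
      have : (j : ℝ) + 1 ≤ k := by exact_mod_cast hjk
      linarith
    refine Or.inr ⟨j, ⟨(Nat.floor_lt hT).mpr hTj, Nat.lt_ceil.mpr ?_⟩, rfl, hjk, ?_⟩
    · nlinarith
    · have hgap : ((k - j : ℕ) : ℝ) ≤ 5 * T ^ 3 / (3 * (j : ℝ) ^ 2) := by
        rw [Nat.cast_sub hjk.le, le_div_iff₀ (by positivity)]
        exact key.le
      have := Nat.le_floor hgap
      omega

lemma card_stripBox_le (hT : 0 ≤ T) : ((stripBox T).card : ℝ) ≤ 6 * T ^ 2 := by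
  rw [stripBox, card_product, Nat.card_Icc, Nat.card_Icc, Nat.add_sub_cancel, Nat.add_sub_cancel,
    Nat.cast_mul]
  calc (⌊T⌋₊ : ℝ) * ⌊6 * T⌋₊ ≤ T * (6 * T) :=
        mul_le_mul (Nat.floor_le hT) (Nat.floor_le (by positivity)) (Nat.cast_nonneg _) hT
    _ = 6 * T ^ 2 := by ring

lemma card_stripColumns_le (hT : 0 < T) : ((stripColumns T).card : ℝ) ≤ 10 / 3 * T ^ 2 := by
  have hcard : (stripColumns T).card ≤
      ∑ j ∈ Ioo ⌊T⌋₊ ⌈5 * T ^ 3⌉₊, ⌊5 * T ^ 3 / (3 * (j : ℝ) ^ 2)⌋₊ := by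
    refine card_biUnion_le.trans (sum_le_sum fun j _ ↦ ?_)
    simp
  have hfloor : T < ⌊T⌋₊ + 1 := Nat.lt_floor_add_one T
  calc ((stripColumns T).card : ℝ)
      ≤ ∑ j ∈ Ioo ⌊T⌋₊ ⌈5 * T ^ 3⌉₊, 5 * T ^ 3 / 3 * ((j : ℝ) ^ 2)⁻¹ := by
        refine (Nat.cast_le.mpr hcard).trans ?_
        push_cast
        refine sum_le_sum fun j _ ↦ (Nat.floor_le (by positivity)).trans_eq ?_
        ring
    _ = 5 * T ^ 3 / 3 * ∑ j ∈ Ioo ⌊T⌋₊ ⌈5 * T ^ 3⌉₊, ((j : ℝ) ^ 2)⁻¹ := (mul_sum ..).symm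
    _ ≤ 5 * T ^ 3 / 3 * (2 / T) := by
        gcongr
        exact (sum_Ioo_inv_sq_le _ _).trans (div_le_div_of_nonneg_left zero_le_two hT hfloor.le)
    _ = 10 / 3 * T ^ 2 := by field_simp; ring

lemma ncard_powDiffStrip_le (hd : 3 ≤ d) (hT : 0 < T) :
    ((powDiffStrip d (5 * T ^ d)).ncard : ℝ) ≤ 28 / 3 * T ^ 2 := by
  have hcard := Set.ncard_le_ncard (powDiffStrip_subset hd hT.le) (finite_toSet _)
  rw [Set.ncard_coe_finset] at hcard
  calc ((powDiffStrip d (5 * T ^ d)).ncard : ℝ) ≤ (stripBox T).card + (stripColumns T).card := by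
        exact_mod_cast hcard.trans (card_union_le _ _)
    _ ≤ 6 * T ^ 2 + 10 / 3 * T ^ 2 :=
        add_le_add (card_stripBox_le hT.le) (card_stripColumns_le hT)
    _ = 28 / 3 * T ^ 2 := by ring

end

theorem lattice_points_below_curve (d : ℕ) (hd : 3 ≤ d) (D : ℝ) (hD : 1 ≤ D) :
    (({p : ℕ × ℕ | 0 < p.1 ∧ 0 < p.2 ∧
        0 < (p.2 : ℝ) ^ d - (p.1 : ℝ) ^ d ∧
        (p.2 : ℝ) ^ d - (p.1 : ℝ) ^ d < 5 * D}).ncard : ℝ)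
      ≤ 16 * D ^ ((2 : ℝ) / d) := by
  have hD0 : 0 < D := by linarith
  set T := D ^ ((d : ℝ)⁻¹)
  have hTpos : 0 < T := by positivity
  have hTd : T ^ d = D := Real.rpow_inv_natCast_pow hD0.le (by omega)
  have hT2 : D ^ ((2 : ℝ) / d) = T ^ 2 := by
    rw [div_eq_mul_inv, mul_comm, Real.rpow_mul hD0.le, Real.rpow_two]
  have hbound := ncard_powDiffStrip_le hd hTpos
  rw [hTd] at hbound
  rw [hT2]
  exact hbound.trans (by nlinarith)
end

section
/- Let d ≥ 3 be an integer and let E, D be real numbers with D ≤ E ≤ D² and D ≥ 1. Then |{(j,k) ∈ ℕ² : j < k and |k^d − j^d − E| < D}| ≤ C_d D^{2/d}, where C_d is a constant depending only on d. -/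
open Finset Real
set_option maxHeartbeats 1000000

lemma Llow (n : ℕ) (a b : ℝ) (hb : 0 ≤ b) (hba : b ≤ a) :
    ((n:ℝ)+1) * b ^ n * (a - b) ≤ a ^ (n+1) - b ^ (n+1) := by
  induction n with
  | zero => simp
  | succ n ih =>
    have ha : 0 ≤ a := le_trans hb hba
    have hb1 : (0:ℝ) ≤ b ^ n := pow_nonneg hb n
    have t0 : (0:ℝ) ≤ ((n:ℝ)+1) * b ^ n * (a - b) := by
      have := sub_nonneg.2 hba; positivity
    have t1 : a * (((n:ℝ)+1) * b ^ n * (a - b)) ≤ a * (a ^ (n+1) - b ^ (n+1)) :=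
      mul_le_mul_of_nonneg_left ih ha
    have t2 : b * (((n:ℝ)+1) * b ^ n * (a - b)) ≤ a * (((n:ℝ)+1) * b ^ n * (a - b)) :=
      mul_le_mul_of_nonneg_right hba t0
    have t3 : (0:ℝ) ≤ (a - b) * b ^ (n+1) := by
      have := sub_nonneg.2 hba; positivity
    have e1 : a ^ (n+1+1) - b ^ (n+1+1)
        = a * (a ^ (n+1) - b ^ (n+1)) + (a - b) * b ^ (n+1) := by ring
    have e2 : b * (((n:ℝ)+1) * b ^ n * (a - b)) = ((n:ℝ)+1) * b ^ (n+1) * (a - b) := by ring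
    push_cast
    nlinarith [t1, t2, t3]

lemma Lup (n : ℕ) (a b : ℝ) (hb : 0 ≤ b) (hba : b ≤ a) :
    a ^ (n+1) - b ^ (n+1) ≤ ((n:ℝ)+1) * a ^ n * (a - b) := by
  induction n with
  | zero => simp
  | succ n ih =>
    have ha : 0 ≤ a := le_trans hb hba
    have ha1 : (0:ℝ) ≤ a ^ n := pow_nonneg ha n
    have t1 : a * (a ^ (n+1) - b ^ (n+1)) ≤ a * (((n:ℝ)+1) * a ^ n * (a - b)) :=
      mul_le_mul_of_nonneg_left ih ha
    have h1 : b ^ (n+1) ≤ a ^ (n+1) := pow_le_pow_left₀ hb hba _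
    have t3 : (a - b) * b ^ (n+1) ≤ (a - b) * a ^ (n+1) :=
      mul_le_mul_of_nonneg_left h1 (sub_nonneg.2 hba)
    have e1 : a ^ (n+1+1) - b ^ (n+1+1)
        = a * (a ^ (n+1) - b ^ (n+1)) + (a - b) * b ^ (n+1) := by ring
    have e2 : a * (((n:ℝ)+1) * a ^ n * (a - b)) = ((n:ℝ)+1) * a ^ (n+1) * (a - b) := by ring
    push_cast
    nlinarith [t1, t3]

lemma Lkey (e : ℕ) (b m h : ℝ) (hb : 0 ≤ b) (hm : 0 ≤ m) (hh : 0 ≤ h) :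
    m * h * (b+h)^e ≤ ((b+m+h)^(e+2) - (b+m)^(e+2)) - ((b+h)^(e+2) - b^(e+2)) := by
  have g1 := geom_sum₂_mul (b+m+h) (b+h) (e+2)
  have g2 := geom_sum₂_mul (b+m) b (e+2)
  rw [show b+m+h - (b+h) = m from by ring] at g1
  rw [show b+m - b = m from by ring] at g2
  set S1 := ∑ i ∈ range (e+2), (b+m+h)^i * (b+h)^(e+2-1-i) with hS1
  set S2 := ∑ i ∈ range (e+2), (b+m)^i * b^(e+2-1-i) with hS2
  have key : S2 + h * (b+h)^e ≤ S1 := by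
    rw [hS1, hS2, Finset.sum_range_succ' (fun i => (b+m+h)^i * (b+h)^(e+2-1-i)) (e+1),
      Finset.sum_range_succ' (fun i => (b+m)^i * b^(e+2-1-i)) (e+1)]
    simp only [pow_zero, one_mul, Nat.sub_zero]
    have hmain : ∑ i ∈ range (e+1), (b+m)^(i+1) * b^(e+2-1-(i+1))
        ≤ ∑ i ∈ range (e+1), (b+m+h)^(i+1) * (b+h)^(e+2-1-(i+1)) := by
      apply Finset.sum_le_sum
      intro i _
      apply mul_le_mul (pow_le_pow_left₀ (by linarith) (by linarith) _)
        (pow_le_pow_left₀ hb (by linarith) _) (by positivity) (by positivity)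
    have h0 : b^(e+2-1) + h*(b+h)^e ≤ (b+h)^(e+2-1) := by
      have e1 : (b+h)^(e+1) = b*(b+h)^e + h*(b+h)^e := by ring
      have e2 : b^(e+1) = b * b^e := by ring
      have h3 : b * b^e ≤ b * (b+h)^e :=
        mul_le_mul_of_nonneg_left (pow_le_pow_left₀ hb (by linarith) e) hb
      have hee : e+2-1 = e+1 := by omega
      rw [hee, e1, e2]; linarith
    linarith
  have hfin : (S2 + h * (b+h)^e) * m ≤ S1 * m :=
    mul_le_mul_of_nonneg_right key hm
  nlinarith [hfin]

lemma bern_step (a x : ℝ) (ha0 : 0 ≤ a) (ha1 : a ≤ 1/2) (hx : 1 ≤ x) :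
    ((x) ^ a)⁻¹ ≤ 2 * (x ^ (1-a) - (x-1) ^ (1-a)) := by
  have hx0 : 0 < x := lt_of_lt_of_le zero_lt_one hx
  have hs : -1 ≤ -1/x := by
    rw [neg_div, neg_le_neg_iff]
    exact div_le_one_of_le₀ hx hx0.le
  have hB := rpow_one_add_le_one_add_mul_self hs (p := 1 - a) (by linarith) (by linarith)
  have e0 : 1 + -1/x = (x-1)/x := by field_simp; ring
  rw [e0] at hB
  -- multiply both sides by x^(1-a)
  have hxp : (0:ℝ) < x ^ (1-a) := rpow_pos_of_pos hx0 _
  have hmul : ((x-1)/x) ^ (1-a) * x ^ (1-a) ≤ (1 + (1-a) * (-1/x)) * x ^ (1-a) :=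
    mul_le_mul_of_nonneg_right hB hxp.le
  have e1 : ((x-1)/x) ^ (1-a) * x ^ (1-a) = (x-1) ^ (1-a) := by
    rw [← Real.mul_rpow (div_nonneg (by linarith) hx0.le) hx0.le, div_mul_cancel₀]
    exact hx0.ne'
  have e2 : (1 + (1-a) * (-1/x)) * x ^ (1-a) = x ^ (1-a) - (1-a) * (x ^ (1-a) / x) := by
    field_simp; ring
  have e3 : x ^ (1-a) / x = x ^ (-a) := by
    have h1 : x ^ (1-a) = x * x ^ (-a) := by
      rw [show (1:ℝ)-a = 1 + (-a) by ring, Real.rpow_add hx0, Real.rpow_one]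
    rw [h1]
    field_simp
  rw [e1, e2, e3] at hmul
  have e4 : (x ^ a)⁻¹ = x ^ (-a) := (Real.rpow_neg hx0.le a).symm
  rw [e4]
  have hxa : (0:ℝ) < x ^ (-a) := rpow_pos_of_pos hx0 _
  nlinarith [hmul, hxa]

lemma sum_rpow_inv (a : ℝ) (ha0 : 0 ≤ a) (ha1 : a ≤ 1/2) (H : ℕ) :
    ∑ h ∈ Icc 1 H, (((h:ℕ):ℝ) ^ a)⁻¹ ≤ 2 * (H:ℝ) ^ (1 - a) := by
  induction H with
  | zero =>
    simp [Real.zero_rpow (by linarith : (1:ℝ) - a ≠ 0)]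
  | succ H ih =>
    rw [Finset.sum_Icc_succ_top (by omega : 1 ≤ H + 1)]
    have hb := bern_step a ((H:ℝ)+1) ha0 ha1 (by linarith [Nat.cast_nonneg (α:=ℝ) H])
    have hc : (((H+1:ℕ)):ℝ) = (H:ℝ)+1 := by push_cast; ring
    rw [hc]
    have : (H:ℝ)+1-1 = (H:ℝ) := by ring
    rw [this] at hb
    linarith

lemma pow_le_imp (n : ℕ) (hn : n ≠ 0) (x y : ℝ) (hx : 0 ≤ x) (hxy : x^n ≤ y) :
    x ≤ y ^ ((n:ℝ))⁻¹ := by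
  calc x = (x^n) ^ ((n:ℝ))⁻¹ := (Real.pow_rpow_inv_natCast hx hn).symm
  _ ≤ y ^ ((n:ℝ))⁻¹ := Real.rpow_le_rpow (pow_nonneg hx n) hxy (by positivity)

theorem lattice_points_in_shell (d : ℕ) (hd : 3 ≤ d) :
    ∃ C : ℝ, 0 < C ∧ ∀ D E : ℝ, 1 ≤ D → D ≤ E → E ≤ D ^ 2 →
      (({p : ℕ × ℕ | 0 < p.1 ∧ p.1 < p.2 ∧
          |(p.2 : ℝ) ^ d - (p.1 : ℝ) ^ d - E| < D}).ncard : ℝ)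
        ≤ C * D ^ ((2 : ℝ) / d) := by
  obtain ⟨e, rfl⟩ : ∃ e, d = e + 3 := ⟨d - 3, by omega⟩
  clear hd
  classical
  set dR : ℝ := (e:ℝ) + 3 with hdR
  have hdR3 : (3:ℝ) ≤ dR := by
    have : (0:ℝ) ≤ (e:ℝ) := Nat.cast_nonneg e
    rw [hdR]; linarith
  have hdR0 : (0:ℝ) < dR := by linarith
  have hcast : ((e+3:ℕ):ℝ) = dR := by rw [hdR]; push_cast; ring
  refine ⟨20 * dR, by positivity, ?_⟩
  intro D E hD hDE hED2
  have hD0 : (0:ℝ) < D := lt_of_lt_of_le zero_lt_one hD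
  have hE1 : (1:ℝ) ≤ E := le_trans hD hDE
  have hE0 : (0:ℝ) < E := lt_of_lt_of_le zero_lt_one hE1
  have hED2 : E + D ≤ 2 * D^2 := by nlinarith
  have hEDpos : (0:ℝ) < E + D := by linarith
  set α : ℝ := ((e:ℝ)+2)⁻¹ with hα
  set β : ℝ := ((e:ℝ)+1)/((e:ℝ)+2) with hβ
  have he0 : (0:ℝ) ≤ (e:ℝ) := Nat.cast_nonneg e
  have hα0 : 0 < α := by rw [hα]; positivity
  have hαβ : α + β = 1 := by rw [hα, hβ]; field_simp; ring
  have hαhalf : α ≤ 1/2 := by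
    rw [hα]
    rw [inv_le_comm₀ (by positivity) (by norm_num)]
    linarith
  have hβ0 : 0 < β := by rw [hβ]; positivity
  have hβ1 : β ≤ 1 := by linarith
  set Hmax : ℕ := ⌊(E + D) ^ dR⁻¹⌋₊ with hHmax
  set Jmax : ℕ := ⌊E + D⌋₊ with hJmax
  set P : ℕ → ℕ → Prop :=
    fun j h => 0 < j ∧ |((j:ℝ)+(h:ℝ))^(e+3) - ((j:ℝ))^(e+3) - E| < D with hP
  set B : ℕ → Finset ℕ := fun h => (Finset.Icc 1 Jmax).filter (fun j => P j h) with hB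
  set F : Finset (ℕ×ℕ) :=
    (Finset.Icc 1 Hmax).biUnion (fun h => (B h).image (fun j => (j, j + h))) with hF
  -- basic consequences of P
  have Pfacts : ∀ j h : ℕ, 1 ≤ h → P j h →
      (e+3:ℝ) * (j:ℝ)^(e+2) * (h:ℝ) ≤ E + D ∧ (h:ℝ)^(e+3) ≤ E + D ∧ (j:ℝ) ≤ E + D := by
    intro j h hh hPjh
    obtain ⟨hj0, habs⟩ := hPjh
    have hj1 : (1:ℝ) ≤ (j:ℝ) := by exact_mod_cast hj0
    have hh1 : (1:ℝ) ≤ (h:ℝ) := by exact_mod_cast hh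
    have hfup : ((j:ℝ)+(h:ℝ))^(e+3) - ((j:ℝ))^(e+3) < E + D := by
      have := abs_lt.1 habs
      linarith [this.2]
    have hlow : (e+3:ℝ) * (j:ℝ)^(e+2) * (h:ℝ)
        ≤ ((j:ℝ)+(h:ℝ))^(e+3) - ((j:ℝ))^(e+3) := by
      have := Llow (e+2) ((j:ℝ)+(h:ℝ)) (j:ℝ) (by linarith) (by linarith)
      push_cast at this ⊢
      calc ((e:ℝ)+3) * (j:ℝ)^(e+2) * (h:ℝ)
          = ((e:ℝ)+2+1) * (j:ℝ)^(e+2) * (((j:ℝ)+(h:ℝ)) - (j:ℝ)) := by ring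
        _ ≤ _ := this
    have hpow : (h:ℝ)^(e+3) ≤ ((j:ℝ)+(h:ℝ))^(e+3) - ((j:ℝ))^(e+3) := by
      have := pow_add_pow_le (le_trans zero_le_one hj1) (le_trans zero_le_one hh1)
        (n := e+3) (by omega)
      linarith
    refine ⟨by linarith, by linarith, ?_⟩
    have h1 : (j:ℝ) ≤ (j:ℝ)^(e+2) := le_self_pow₀ hj1 (by omega)
    have h2 : (j:ℝ)^(e+2) * 1 ≤ (j:ℝ)^(e+2) * ((e+3:ℝ) * (h:ℝ)) := by
      apply mul_le_mul_of_nonneg_left _ (by positivity)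
      nlinarith
    nlinarith
  -- S ⊆ F
  have hsub : {p : ℕ × ℕ | 0 < p.1 ∧ p.1 < p.2 ∧
      |(p.2 : ℝ) ^ (e+3) - (p.1 : ℝ) ^ (e+3) - E| < D} ⊆ (F : Set (ℕ×ℕ)) := by
    rintro ⟨j, k⟩ ⟨hj0, hjk, habs⟩
    simp only [] at hj0 hjk habs
    set h : ℕ := k - j with hh
    have hk : k = j + h := by omega
    have hh1 : 1 ≤ h := by omega
    have hPjh : P j h := by
      refine ⟨hj0, ?_⟩
      have : ((k:ℕ):ℝ) = (j:ℝ) + (h:ℝ) := by rw [hk]; push_cast; ring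
      rw [← this]
      exact habs
    obtain ⟨hf1, hf2, hf3⟩ := Pfacts j h hh1 hPjh
    have hhmem : h ∈ Finset.Icc 1 Hmax := by
      rw [Finset.mem_Icc]
      refine ⟨hh1, ?_⟩
      rw [hHmax]
      apply Nat.le_floor
      have : (h:ℝ) ≤ (E+D) ^ (((e+3:ℕ):ℝ))⁻¹ :=
        pow_le_imp (e+3) (by omega) (h:ℝ) (E+D) (Nat.cast_nonneg h) hf2
      rwa [hcast] at this
    have hjmem : j ∈ B h := by
      rw [hB]
      simp only [Finset.mem_filter, Finset.mem_Icc]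
      exact ⟨⟨hj0, Nat.le_floor hf3⟩, hPjh⟩
    rw [hF]
    simp only [Finset.coe_biUnion, Set.mem_iUnion, Finset.mem_coe]
    exact ⟨h, hhmem, Finset.mem_image.2 ⟨j, hjmem, by rw [← hk]⟩⟩
  have hcard1 : (({p : ℕ × ℕ | 0 < p.1 ∧ p.1 < p.2 ∧
      |(p.2 : ℝ) ^ (e+3) - (p.1 : ℝ) ^ (e+3) - E| < D}).ncard : ℝ)
      ≤ ∑ h ∈ Finset.Icc 1 Hmax, ((B h).card : ℝ) := by
    have h2 : ({p : ℕ × ℕ | 0 < p.1 ∧ p.1 < p.2 ∧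
        |(p.2 : ℝ) ^ (e+3) - (p.1 : ℝ) ^ (e+3) - E| < D}).ncard ≤ F.card := by
      have := Set.ncard_le_ncard hsub F.finite_toSet
      rwa [Set.ncard_coe_finset] at this
    have h3 : F.card ≤ ∑ h ∈ Finset.Icc 1 Hmax, (B h).card :=
      le_trans Finset.card_biUnion_le
        (Finset.sum_le_sum fun h _ => Finset.card_image_le)
    calc (({p : ℕ × ℕ | 0 < p.1 ∧ p.1 < p.2 ∧
        |(p.2 : ℝ) ^ (e+3) - (p.1 : ℝ) ^ (e+3) - E| < D}).ncard : ℝ)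
        ≤ (F.card : ℝ) := by exact_mod_cast h2
      _ ≤ _ := by push_cast; exact_mod_cast Nat.cast_le.2 h3
  have hHle : (Hmax:ℝ) ≤ (E + D) ^ dR⁻¹ := Nat.floor_le (by positivity)
  have hsum := sum_rpow_inv α hα0.le hαhalf Hmax
  rw [show (1:ℝ) - α = β by linarith] at hsum
  have hD2d : (0:ℝ) < D ^ ((2:ℝ)/dR) := Real.rpow_pos_of_pos hD0 _
  have hgoal2 : ((2:ℝ)/(((e+3:ℕ)):ℝ)) = 2/dR := by rw [hcast]
  rw [hgoal2]
  refine le_trans hcard1 ?_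
  rcases le_or_gt E (2*D) with hcase | hcase
  · -- Case B : E ≤ 2D
    have perh : ∀ h ∈ Finset.Icc 1 Hmax, ((B h).card : ℝ) ≤ D ^ α * (((h:ℕ):ℝ) ^ α)⁻¹ := by
      intro h hh
      rw [Finset.mem_Icc] at hh
      have hh1 : (1:ℝ) ≤ (h:ℝ) := by exact_mod_cast hh.1
      have hhpos : (0:ℝ) < (h:ℝ) := by linarith
      have hsubB : B h ⊆ Finset.Icc 1 (⌊(D/(h:ℝ)) ^ α⌋₊) := by
        intro j hj
        rw [hB] at hj
        simp only [Finset.mem_filter, Finset.mem_Icc] at hj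
        obtain ⟨⟨hj1, _⟩, hPjh⟩ := hj
        obtain ⟨hf1, _, _⟩ := Pfacts j h hh.1 hPjh
        have hj2 : (j:ℝ)^(e+2) * (h:ℝ) ≤ D := by nlinarith
        have hj3 : (j:ℝ)^(e+2) ≤ D / (h:ℝ) := (le_div_iff₀ hhpos).2 hj2
        have hj4 : (j:ℝ) ≤ (D/(h:ℝ)) ^ (((e+2:ℕ)):ℝ)⁻¹ :=
          pow_le_imp (e+2) (by omega) (j:ℝ) _ (Nat.cast_nonneg j) hj3
        have : (((e+2:ℕ)):ℝ)⁻¹ = α := by rw [hα]; push_cast; ring_nf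
        rw [this] at hj4
        exact Finset.mem_Icc.2 ⟨hj1, Nat.le_floor hj4⟩
      have hcard : ((B h).card : ℝ) ≤ (D/(h:ℝ)) ^ α := by
        have h1 : (B h).card ≤ ⌊(D/(h:ℝ)) ^ α⌋₊ := by
          have := Finset.card_le_card hsubB
          simpa [Nat.card_Icc] using this
        calc ((B h).card : ℝ) ≤ (⌊(D/(h:ℝ)) ^ α⌋₊ : ℝ) := by exact_mod_cast h1
          _ ≤ (D/(h:ℝ)) ^ α := Nat.floor_le (by positivity)
      rwa [Real.div_rpow hD0.le hhpos.le, div_eq_mul_inv] at hcard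
    have hstep : ∑ h ∈ Finset.Icc 1 Hmax, ((B h).card : ℝ)
        ≤ D ^ α * (2 * (Hmax:ℝ) ^ β) := by
      calc ∑ h ∈ Finset.Icc 1 Hmax, ((B h).card : ℝ)
          ≤ ∑ h ∈ Finset.Icc 1 Hmax, D ^ α * (((h:ℕ):ℝ) ^ α)⁻¹ :=
            Finset.sum_le_sum perh
        _ = D ^ α * ∑ h ∈ Finset.Icc 1 Hmax, (((h:ℕ):ℝ) ^ α)⁻¹ := by
            rw [Finset.mul_sum]
        _ ≤ D ^ α * (2 * (Hmax:ℝ) ^ β) := by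
            apply mul_le_mul_of_nonneg_left hsum (by positivity)
    -- numeric conclusion, case B
    have hH3D : (Hmax:ℝ) ^ β ≤ ((3*D) ^ dR⁻¹) ^ β := by
      apply Real.rpow_le_rpow (Nat.cast_nonneg Hmax) _ hβ0.le
      refine le_trans hHle (Real.rpow_le_rpow hEDpos.le (by linarith) (by positivity))
    have hint : ((3*D) ^ dR⁻¹) ^ β = (3*D) ^ (dR⁻¹ * β) := by
      rw [← Real.rpow_mul (by linarith)]
    have h3D : (3*D) ^ (dR⁻¹ * β) = 3 ^ (dR⁻¹*β) * D ^ (dR⁻¹*β) :=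
      Real.mul_rpow (by norm_num) hD0.le
    have h3le : (3:ℝ) ^ (dR⁻¹*β) ≤ 3 := by
      nth_rewrite 2 [show (3:ℝ) = 3^(1:ℝ) by rw [Real.rpow_one]]
      apply Real.rpow_le_rpow_of_exponent_le (by norm_num)
      have : dR⁻¹ ≤ 1 := by
        rw [inv_le_one_iff₀]; right; linarith
      nlinarith [hβ0.le, hβ1, inv_pos.2 hdR0]
    have hDcomb : D ^ α * D ^ (dR⁻¹*β) = D ^ ((2:ℝ)/dR) := by
      rw [← Real.rpow_add hD0]
      congr 1
      rw [hα, hβ, hdR]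
      have h1 : (e:ℝ)+2 ≠ 0 := by positivity
      have h2 : (e:ℝ)+3 ≠ 0 := by positivity
      field_simp
      ring
    have final : D ^ α * (2 * (Hmax:ℝ) ^ β) ≤ 6 * D ^ ((2:ℝ)/dR) := by
      have hDα : (0:ℝ) < D ^ α := Real.rpow_pos_of_pos hD0 _
      have c1 : (Hmax:ℝ) ^ β ≤ 3 * D ^ (dR⁻¹*β) := by
        rw [hint, h3D] at hH3D
        refine le_trans hH3D ?_
        apply mul_le_mul_of_nonneg_right h3le (Real.rpow_pos_of_pos hD0 _).le
      calc D ^ α * (2 * (Hmax:ℝ) ^ β) ≤ D ^ α * (2 * (3 * D ^ (dR⁻¹*β))) := by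
            apply mul_le_mul_of_nonneg_left _ hDα.le
            apply mul_le_mul_of_nonneg_left c1 (by norm_num)
        _ = 6 * (D ^ α * D ^ (dR⁻¹*β)) := by ring
        _ = 6 * D ^ ((2:ℝ)/dR) := by rw [hDcomb]
    refine le_trans hstep (le_trans final ?_)
    nlinarith [hD2d]
  · -- Case A : 2D < E
    set K : ℝ := 2*D*(2*dR)^β/E^β with hK
    have hEβ : (0:ℝ) < E ^ β := Real.rpow_pos_of_pos hE0 _
    have h2dRβ : (0:ℝ) < (2*dR) ^ β := Real.rpow_pos_of_pos (by linarith) _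
    have hK0 : 0 ≤ K := by rw [hK]; positivity
    have perh : ∀ h ∈ Finset.Icc 1 Hmax,
        ((B h).card : ℝ) ≤ 1 + K * (((h:ℕ):ℝ) ^ α)⁻¹ := by
      intro h hh
      rw [Finset.mem_Icc] at hh
      have hh1 : (1:ℝ) ≤ (h:ℝ) := by exact_mod_cast hh.1
      have hhpos : (0:ℝ) < (h:ℝ) := by linarith
      have hhα : (0:ℝ) < ((h:ℕ):ℝ)^α := Real.rpow_pos_of_pos hhpos _
      rcases Finset.eq_empty_or_nonempty (B h) with hBe | hne
      · rw [hBe]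
        simp only [Finset.card_empty, Nat.cast_zero]
        positivity
      set j₁ := (B h).min' hne with hj₁def
      set jm := (B h).max' hne with hjmdef
      have hj₁mem := (B h).min'_mem hne
      have hjmmem := (B h).max'_mem hne
      have hj1m : j₁ ≤ jm := (B h).min'_le _ hjmmem
      have memP : ∀ j ∈ B h, 1 ≤ j ∧ |((j:ℝ)+(h:ℝ))^(e+3) - ((j:ℝ))^(e+3) - E| < D := by
        intro j hj
        rw [hB] at hj
        simp only [Finset.mem_filter, Finset.mem_Icc] at hj
        exact ⟨hj.1.1, hj.2.2⟩
      obtain ⟨hj₁1, habs1⟩ := memP j₁ hj₁mem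
      obtain ⟨hjm1, habsm⟩ := memP jm hjmmem
      have hx1 : (1:ℝ) ≤ (j₁:ℝ) := by exact_mod_cast hj₁1
      have hjmr : (j₁:ℝ) ≤ (jm:ℝ) := by exact_mod_cast hj1m
      have habs1' := abs_lt.1 habs1
      have habsm' := abs_lt.1 habsm
      -- card bounded by span + 1
      have hsubI : B h ⊆ Finset.Icc j₁ jm := fun j hj =>
        Finset.mem_Icc.2 ⟨(B h).min'_le j hj, (B h).le_max' j hj⟩
      have hcard : ((B h).card : ℝ) ≤ ((jm:ℝ) - (j₁:ℝ)) + 1 := by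
        have h1 : (B h).card ≤ jm + 1 - j₁ := by
          have := Finset.card_le_card hsubI
          simpa [Nat.card_Icc] using this
        have h2 : ((jm + 1 - j₁:ℕ):ℝ) = (jm:ℝ) + 1 - (j₁:ℝ) := by
          have hle : j₁ ≤ jm + 1 := by omega
          push_cast [hle]
          ring
        calc ((B h).card:ℝ) ≤ ((jm + 1 - j₁:ℕ):ℝ) := by exact_mod_cast h1
          _ = (jm:ℝ) - (j₁:ℝ) + 1 := by rw [h2]; ring
      -- key gap bound
      have hkey := Lkey (e+1) (j₁:ℝ) ((jm:ℝ) - (j₁:ℝ)) (h:ℝ)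
        (by linarith) (by linarith) (by linarith)
      rw [show (j₁:ℝ) + ((jm:ℝ) - (j₁:ℝ)) = (jm:ℝ) from by ring] at hkey
      rw [show e+1+2 = e+3 from by omega] at hkey
      have hspan2D : ((jm:ℝ) - (j₁:ℝ)) * (h:ℝ) * ((j₁:ℝ)+(h:ℝ))^(e+1) ≤ 2*D := by
        linarith [habsm'.2, habs1'.1, hkey]
      -- upper bound on f(j₁)
      have hup := Lup (e+2) ((j₁:ℝ)+(h:ℝ)) (j₁:ℝ) (by linarith) (by linarith)
      rw [show e+2+1 = e+3 from by omega] at hup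
      rw [show ((j₁:ℝ)+(h:ℝ)) - (j₁:ℝ) = (h:ℝ) from by ring] at hup
      push_cast at hup
      -- lower bound on (j₁+h)^(e+2)
      have hW : E/(2*dR*(h:ℝ)) ≤ ((j₁:ℝ)+(h:ℝ))^(e+2) := by
        rw [div_le_iff₀ (by positivity), hdR]
        linarith [hup, habs1'.1, hcase, hD0]
      have hWpos : (0:ℝ) < E/(2*dR*(h:ℝ)) := by positivity
      -- rpow comparison
      have hq2 : (E/(2*dR*(h:ℝ))) ^ β ≤ ((j₁:ℝ)+(h:ℝ))^(e+1) := by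
        have h1 : ((((j₁:ℝ)+(h:ℝ))^(e+2))) ^ β = ((j₁:ℝ)+(h:ℝ)) ^ (((e+2:ℕ):ℝ) * β) :=
          (Real.rpow_natCast_mul (by linarith) (e+2) β).symm
        have h2 : ((e+2:ℕ):ℝ) * β = ((e+1:ℕ):ℝ) := by
          rw [hβ]; push_cast; field_simp
        have h3 : ((j₁:ℝ)+(h:ℝ)) ^ (((e+1:ℕ):ℝ)) = ((j₁:ℝ)+(h:ℝ))^(e+1) :=
          Real.rpow_natCast _ (e+1)
        calc (E/(2*dR*(h:ℝ)))^β ≤ ((((j₁:ℝ)+(h:ℝ))^(e+2)))^β :=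
              Real.rpow_le_rpow hWpos.le hW hβ0.le
          _ = ((j₁:ℝ)+(h:ℝ))^(e+1) := by rw [h1, h2, h3]
      have hspanW : ((jm:ℝ) - (j₁:ℝ)) * ((h:ℝ) * (E/(2*dR*(h:ℝ)))^β) ≤ 2*D := by
        have hspan0 : (0:ℝ) ≤ (jm:ℝ) - (j₁:ℝ) := by linarith
        have t : (h:ℝ) * (E/(2*dR*(h:ℝ)))^β ≤ (h:ℝ) * ((j₁:ℝ)+(h:ℝ))^(e+1) :=
          mul_le_mul_of_nonneg_left hq2 (by positivity)
        linarith [mul_le_mul_of_nonneg_left t hspan0, hspan2D]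
      -- rewrite h * W^β
      have hWβ : (E/(2*dR*(h:ℝ)))^β = E^β / ((2*dR)^β * (h:ℝ)^β) := by
        rw [show 2*dR*(h:ℝ) = (2*dR)*(h:ℝ) from by ring,
          Real.div_rpow hE0.le (by positivity), Real.mul_rpow (by linarith) hhpos.le]
      have hhβ : (0:ℝ) < (h:ℝ)^β := Real.rpow_pos_of_pos hhpos _
      have hhh : (h:ℝ) / (h:ℝ)^β = (h:ℝ)^α := by
        have h1 : (h:ℝ)^((1:ℝ)-β) = (h:ℝ)^(1:ℝ)/(h:ℝ)^β := Real.rpow_sub hhpos 1 β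
        rw [Real.rpow_one] at h1
        rw [← h1]
        congr 1
        linarith
      have hc : (h:ℝ) * (E^β / ((2*dR)^β * (h:ℝ)^β))
          = ((h:ℝ)/(h:ℝ)^β) * E^β / (2*dR)^β := by
        field_simp
      rw [hhh] at hc
      have hcpos : (0:ℝ) < (h:ℝ)^α * E^β / (2*dR)^β := by positivity
      have hspanC : ((jm:ℝ) - (j₁:ℝ)) * ((h:ℝ)^α * E^β / (2*dR)^β) ≤ 2*D := by
        rw [hWβ, hc] at hspanW
        exact hspanW
      have hfinal_span : ((jm:ℝ) - (j₁:ℝ)) ≤ K * (((h:ℕ):ℝ)^α)⁻¹ := by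
        have heq : K * (((h:ℕ):ℝ)^α)⁻¹ = 2*D / ((h:ℝ)^α * E^β / (2*dR)^β) := by
          rw [hK]
          field_simp
        rw [heq, le_div_iff₀ hcpos]
        exact hspanC
      linarith
    have hsum2 : ∑ h ∈ Finset.Icc 1 Hmax, ((B h).card : ℝ)
        ≤ (Hmax:ℝ) + K * (2 * (Hmax:ℝ) ^ β) := by
      calc ∑ h ∈ Finset.Icc 1 Hmax, ((B h).card : ℝ)
          ≤ ∑ h ∈ Finset.Icc 1 Hmax, (1 + K * (((h:ℕ):ℝ) ^ α)⁻¹) :=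
            Finset.sum_le_sum perh
        _ = (Finset.Icc 1 Hmax).card * 1
            + K * ∑ h ∈ Finset.Icc 1 Hmax, (((h:ℕ):ℝ) ^ α)⁻¹ := by
            rw [Finset.sum_add_distrib, Finset.sum_const, Finset.mul_sum]
            simp
        _ ≤ (Hmax:ℝ) + K * (2 * (Hmax:ℝ) ^ β) := by
            have c1 : ((Finset.Icc 1 Hmax).card : ℝ) * 1 ≤ (Hmax:ℝ) := by
              simp [Nat.card_Icc]
            have c2 : K * ∑ h ∈ Finset.Icc 1 Hmax, (((h:ℕ):ℝ) ^ α)⁻¹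
                ≤ K * (2 * (Hmax:ℝ) ^ β) :=
              mul_le_mul_of_nonneg_left hsum hK0
            linarith
    -- numeric bounds
    have hD2dpos : (0:ℝ) < D ^ ((2:ℝ)/dR) := hD2d
    have hHfirst : (Hmax:ℝ) ≤ 2 * D^((2:ℝ)/dR) := by
      refine le_trans hHle ?_
      have c0 : (E+D)^dR⁻¹ ≤ (2*D^2)^dR⁻¹ :=
        Real.rpow_le_rpow hEDpos.le hED2 (by positivity)
      have c1 : ((2:ℝ)*D^2)^dR⁻¹ = 2^dR⁻¹ * (D^2)^dR⁻¹ :=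
        Real.mul_rpow (by norm_num) (by positivity)
      have e1 : ((D^(2:ℕ)):ℝ)^dR⁻¹ = D ^ (((2:ℕ):ℝ) * dR⁻¹) :=
        (Real.rpow_natCast_mul hD0.le 2 dR⁻¹).symm
      have e2 : ((2:ℕ):ℝ) * dR⁻¹ = 2/dR := by push_cast; ring
      have e3 : (2:ℝ)^dR⁻¹ ≤ 2 := by
        nth_rewrite 2 [show (2:ℝ) = 2^(1:ℝ) from (Real.rpow_one 2).symm]
        apply Real.rpow_le_rpow_of_exponent_le one_le_two
        rw [inv_le_one_iff₀]
        right; linarith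
      calc (E+D)^dR⁻¹ ≤ (2*D^2)^dR⁻¹ := c0
        _ = 2^dR⁻¹ * D^((2:ℝ)/dR) := by rw [c1, e1, e2]
        _ ≤ 2 * D^((2:ℝ)/dR) :=
            mul_le_mul_of_nonneg_right e3 hD2dpos.le
    have hHβ2 : (Hmax:ℝ)^β ≤ 2 * E^(β/dR) := by
      have c1 : (Hmax:ℝ)^β ≤ ((2*E)^dR⁻¹)^β := by
        apply Real.rpow_le_rpow (Nat.cast_nonneg _) _ hβ0.le
        exact le_trans hHle (Real.rpow_le_rpow hEDpos.le (by linarith) (by positivity))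
      have c2 : (((2:ℝ)*E)^dR⁻¹)^β = (2*E)^(dR⁻¹*β) := by
        rw [← Real.rpow_mul (by linarith)]
      have c3 : ((2:ℝ)*E)^(dR⁻¹*β) = 2^(dR⁻¹*β) * E^(dR⁻¹*β) :=
        Real.mul_rpow (by norm_num) hE0.le
      have hexple : dR⁻¹*β ≤ 1 := by
        have h1 : dR⁻¹ ≤ 1 := by rw [inv_le_one_iff₀]; right; linarith
        have h2 : (0:ℝ) ≤ dR⁻¹ := by positivity
        nlinarith
      have c4 : (2:ℝ)^(dR⁻¹*β) ≤ 2 := by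
        nth_rewrite 2 [show (2:ℝ) = 2^(1:ℝ) from (Real.rpow_one 2).symm]
        exact Real.rpow_le_rpow_of_exponent_le one_le_two hexple
      have c5 : dR⁻¹*β = β/dR := by ring
      calc (Hmax:ℝ)^β ≤ ((2*E)^dR⁻¹)^β := c1
        _ = 2^(dR⁻¹*β) * E^(dR⁻¹*β) := by rw [c2, c3]
        _ ≤ 2 * E^(β/dR) := by
            rw [c5] at c4 ⊢
            exact mul_le_mul_of_nonneg_right c4 (Real.rpow_pos_of_pos hE0 _).le
    have hKbound : K ≤ 4*D*dR/E^β := by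
      have c1 : ((2:ℝ)*dR)^β ≤ 2*dR := by
        nth_rewrite 2 [show (2:ℝ)*dR = (2*dR)^(1:ℝ) from (Real.rpow_one _).symm]
        exact Real.rpow_le_rpow_of_exponent_le (by linarith) hβ1
      have c2 : 2*D*((2:ℝ)*dR)^β * E^β ≤ 4*D*dR * E^β := by
        have := mul_le_mul_of_nonneg_right
          (mul_le_mul_of_nonneg_left c1 (by linarith : (0:ℝ) ≤ 2*D)) hEβ.le
        linarith [this]
      rw [hK, div_le_div_iff₀ hEβ hEβ]
      linarith [c2]
    refine le_trans hsum2 ?_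
    have ht2 : K * (2*(Hmax:ℝ)^β) ≤ 16*dR*(D*(E^(β/dR)/E^β)) := by
      have m1 : (0:ℝ) ≤ 2*(Hmax:ℝ)^β := by positivity
      have m2 : 2*(Hmax:ℝ)^β ≤ 2*(2*E^(β/dR)) := by linarith [hHβ2]
      have m3 : K * (2*(Hmax:ℝ)^β) ≤ (4*D*dR/E^β) * (2*(2*E^(β/dR))) :=
        mul_le_mul hKbound m2 m1 (by positivity)
      calc K * (2*(Hmax:ℝ)^β) ≤ (4*D*dR/E^β) * (2*(2*E^(β/dR))) := m3
        _ = 16*dR*(D*(E^(β/dR)/E^β)) := by ring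
    set γ : ℝ := ((e:ℝ)+1)/((e:ℝ)+3) with hγ
    have hγ0 : (0:ℝ) ≤ γ := by rw [hγ]; positivity
    have hEE : E^(β/dR)/E^β = E^(β/dR - β) := (Real.rpow_sub hE0 (β/dR) β).symm
    have hexpγ : β/dR - β = -γ := by
      rw [hβ, hγ, hdR]
      field_simp
      ring
    have hEγ : E^(-γ) ≤ D^(-γ) := by
      rw [Real.rpow_neg hE0.le, Real.rpow_neg hD0.le]
      exact inv_anti₀ (Real.rpow_pos_of_pos hD0 γ)
        (Real.rpow_le_rpow hD0.le hDE hγ0)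
    have hDD : D * D^(-γ) = D^((2:ℝ)/dR) := by
      nth_rewrite 1 [show D = D^(1:ℝ) from (Real.rpow_one D).symm]
      rw [← Real.rpow_add hD0]
      congr 1
      rw [hγ, hdR]
      field_simp
      ring
    have ht3 : K * (2*(Hmax:ℝ)^β) ≤ 16*dR*D^((2:ℝ)/dR) := by
      rw [hEE, hexpγ] at ht2
      have m4 : D*E^(-γ) ≤ D*D^(-γ) := mul_le_mul_of_nonneg_left hEγ hD0.le
      have m5 : 16*dR*(D*E^(-γ)) ≤ 16*dR*(D*D^(-γ)) := by
        apply mul_le_mul_of_nonneg_left m4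
        linarith
      calc K * (2*(Hmax:ℝ)^β) ≤ 16*dR*(D*E^(-γ)) := ht2
        _ ≤ 16*dR*(D*D^(-γ)) := m5
        _ = 16*dR*D^((2:ℝ)/dR) := by rw [hDD]
    have hfin : ((16:ℝ)*dR + 2) * D^((2:ℝ)/dR) ≤ 20*dR * D^((2:ℝ)/dR) :=
      mul_le_mul_of_nonneg_right (by linarith : (16:ℝ)*dR + 2 ≤ 20*dR) hD2dpos.le
    linarith [hHfirst, ht3, hfin]
end

section
/- Let a ≥ e^{90} and set f(x) := 4√(x log x). Then |{(j,k) ∈ ℕ² : j < k and |a − (k² − j²)| < 2f(a)}| ≤ 10 √a (log a)^{3/2}. -/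
set_option maxHeartbeats 1000000

open Finset

private lemma card_Icc_ceil_le {c d : ℝ} (hcd : c ≤ d) :
    ((Finset.Icc ⌈c⌉₊ ⌈d⌉₊).card : ℝ) ≤ d - c + 2 := by
  have h1 : c ≤ (⌈c⌉₊ : ℝ) := Nat.le_ceil c
  rcases le_or_gt (⌈c⌉₊ : ℕ) ⌈d⌉₊ with h | h
  · rw [Nat.card_Icc]
    have hle : ⌈c⌉₊ ≤ ⌈d⌉₊ + 1 := by omega
    rw [Nat.cast_sub hle]
    push_cast
    rcases le_or_gt 0 d with hd | hd
    · have h2 : (⌈d⌉₊ : ℝ) < d + 1 := Nat.ceil_lt_add_one hd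
      linarith
    · have h0 : ⌈d⌉₊ = 0 := Nat.ceil_eq_zero.mpr hd.le
      have h0' : ⌈c⌉₊ = 0 := by omega
      rw [h0, h0']
      push_cast
      linarith
  · rw [Finset.Icc_eq_empty (by omega)]
    simp only [Finset.card_empty, Nat.cast_zero]
    linarith

/-- The finset of candidate values of `j` for a given difference `b`. -/
private noncomputable def Jset (a F : ℝ) (b : ℕ) : Finset ℕ :=
  Finset.Icc ⌈(a - (b:ℝ)^2 - F)/(2*(b:ℝ))⌉₊ ⌈(a - (b:ℝ)^2 + F)/(2*(b:ℝ))⌉₊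

private lemma mem_Jset {a F : ℝ} {b j : ℕ} (hb : 1 ≤ b)
    (h1 : a - (b:ℝ)^2 - F ≤ 2*(j:ℝ)*(b:ℝ)) (h2 : 2*(j:ℝ)*(b:ℝ) ≤ a - (b:ℝ)^2 + F) :
    j ∈ Jset a F b := by
  have hbR : (1:ℝ) ≤ (b:ℝ) := by exact_mod_cast hb
  have h2b : (0:ℝ) < 2*(b:ℝ) := by linarith
  rw [Jset, Finset.mem_Icc]
  constructor
  · apply Nat.ceil_le.mpr
    rw [div_le_iff₀ h2b]
    nlinarith
  · have hjd : (j:ℝ) ≤ (a - (b:ℝ)^2 + F)/(2*(b:ℝ)) := by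
      rw [le_div_iff₀ h2b]
      nlinarith
    have : (j:ℝ) ≤ (⌈(a - (b:ℝ)^2 + F)/(2*(b:ℝ))⌉₊ : ℝ) := le_trans hjd (Nat.le_ceil _)
    exact_mod_cast this

private lemma Jset_card_le (a : ℝ) {F : ℝ} (hF : 0 ≤ F) {b : ℕ} (hb : 1 ≤ b) :
    ((Jset a F b).card : ℝ) ≤ F/(b:ℝ) + 2 := by
  have hbR : (1:ℝ) ≤ (b:ℝ) := by exact_mod_cast hb
  have h2b : (0:ℝ) < 2*(b:ℝ) := by linarith
  have hbne : (b:ℝ) ≠ 0 := by linarith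
  have hcd : (a - (b:ℝ)^2 - F)/(2*(b:ℝ)) ≤ (a - (b:ℝ)^2 + F)/(2*(b:ℝ)) := by
    rw [div_le_div_iff₀ h2b h2b]
    nlinarith
  have hdc : (a - (b:ℝ)^2 + F)/(2*(b:ℝ)) - (a - (b:ℝ)^2 - F)/(2*(b:ℝ)) = F/(b:ℝ) := by
    field_simp
    ring
  have := card_Icc_ceil_le hcd
  rw [Jset]
  linarith

theorem lattice_points_near_a (a : ℝ) (ha : Real.exp 90 ≤ a) :
    (({p : ℕ × ℕ | 0 < p.1 ∧ p.1 < p.2 ∧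
        |a - ((p.2 : ℝ) ^ 2 - (p.1 : ℝ) ^ 2)| < 2 * (4 * Real.sqrt (a * Real.log a))}).ncard : ℝ)
      ≤ 10 * Real.sqrt a * Real.log a ^ ((3 : ℝ) / 2) := by
  classical
  have ha0 : (0:ℝ) < a := lt_of_lt_of_le (Real.exp_pos 90) ha
  have hL90 : (90:ℝ) ≤ Real.log a := by
    calc (90:ℝ) = Real.log (Real.exp 90) := (Real.log_exp 90).symm
    _ ≤ Real.log a := by gcongr
  set L := Real.log a with hLdef
  have hL0 : (0:ℝ) < L := by linarith
  set F := 2 * (4 * Real.sqrt (a * L)) with hFdef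
  have hsa : Real.sqrt (a * L) = Real.sqrt a * Real.sqrt L := Real.sqrt_mul ha0.le L
  have hsa9 : (9:ℝ) ≤ Real.sqrt a := by
    have h81 : (81:ℝ) ≤ a := by
      have := Real.add_one_le_exp (90:ℝ)
      linarith
    nlinarith [Real.sq_sqrt ha0.le, Real.sqrt_nonneg a]
  have hsL9 : (9:ℝ) ≤ Real.sqrt L := by
    nlinarith [Real.sq_sqrt hL0.le, Real.sqrt_nonneg L]
  have hF0 : 0 < F := by
    rw [hFdef, hsa]; nlinarith
  have h64L : 64 * L ≤ a := by
    have h4 : L/4 + 1 ≤ Real.exp (L/4) := Real.add_one_le_exp _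
    have haL : a = Real.exp (L/4) ^ 4 := by
      calc a = Real.exp L := (Real.exp_log ha0).symm
      _ = Real.exp (L/4 + (L/4 + (L/4 + L/4))) := by ring_nf
      _ = Real.exp (L/4) ^ 4 := by
          rw [Real.exp_add, Real.exp_add, Real.exp_add]; ring
    have hp : (L/4 + 1)^4 ≤ (Real.exp (L/4))^4 := by
      apply pow_le_pow_left₀ (by linarith) h4
    nlinarith [hp, hL90, hL0.le, sq_nonneg L, mul_nonneg hL0.le hL0.le]
  have hFa : F ≤ a := by
    have h8 : 8 * Real.sqrt L ≤ Real.sqrt a := by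
      have heq : (8:ℝ) * Real.sqrt L = Real.sqrt (64 * L) := by
        rw [Real.sqrt_mul (by norm_num : (0:ℝ) ≤ 64),
          show (64:ℝ) = 8^2 by norm_num, Real.sqrt_sq (by norm_num : (0:ℝ) ≤ 8)]
      rw [heq]
      exact Real.sqrt_le_sqrt h64L
    have hsq : Real.sqrt a * Real.sqrt a = a := Real.mul_self_sqrt ha0.le
    rw [hFdef, hsa]
    nlinarith [Real.sqrt_nonneg a, Real.sqrt_nonneg L]
  set B : ℕ := ⌈Real.sqrt (2*a)⌉₊ with hBdef
  set D : Finset (ℕ × ℕ) :=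
    (Finset.Icc 1 B).biUnion (fun b => (Jset a F b).image (fun j => (j, j + b))) with hDdef
  have hsub : {p : ℕ × ℕ | 0 < p.1 ∧ p.1 < p.2 ∧
      |a - ((p.2 : ℝ) ^ 2 - (p.1 : ℝ) ^ 2)| < F} ⊆ ↑D := by
    rintro ⟨j, k⟩ ⟨hj0, hjk, habs⟩
    simp only at hj0 hjk habs
    set b : ℕ := k - j with hbdef
    have hb1 : 1 ≤ b := by omega
    have hk : k = j + b := by omega
    have hkR : (k:ℝ) = (j:ℝ) + (b:ℝ) := by exact_mod_cast congrArg (Nat.cast : ℕ → ℝ) hk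
    have habs' := abs_lt.mp habs
    have h1 : a - F < (k:ℝ)^2 - (j:ℝ)^2 := by linarith [habs'.2]
    have h2 : (k:ℝ)^2 - (j:ℝ)^2 < a + F := by linarith [habs'.1]
    have hkey : (k:ℝ)^2 - (j:ℝ)^2 = 2*(j:ℝ)*(b:ℝ) + (b:ℝ)^2 := by
      rw [hkR]; ring
    have hjR : (0:ℝ) ≤ (j:ℝ) := Nat.cast_nonneg j
    have hbR : (1:ℝ) ≤ (b:ℝ) := by exact_mod_cast hb1
    have hbB : b ≤ B := by
      have hbsq : ((b:ℝ))^2 ≤ 2*a := by nlinarith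
      have hble : (b:ℝ) ≤ Real.sqrt (2*a) := by
        have := Real.sqrt_le_sqrt hbsq
        rwa [Real.sqrt_sq (by linarith : (0:ℝ) ≤ (b:ℝ))] at this
      have : (b:ℝ) ≤ (B:ℝ) := le_trans hble (Nat.le_ceil _)
      exact_mod_cast this
    have hjmem : j ∈ Jset a F b := mem_Jset hb1 (by nlinarith) (by nlinarith)
    exact Finset.mem_coe.mpr <| Finset.mem_biUnion.mpr
      ⟨b, Finset.mem_Icc.mpr ⟨hb1, hbB⟩,
        Finset.mem_image.mpr ⟨j, hjmem, by rw [← hk]⟩⟩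
  have hcard1 : ({p : ℕ × ℕ | 0 < p.1 ∧ p.1 < p.2 ∧
      |a - ((p.2 : ℝ) ^ 2 - (p.1 : ℝ) ^ 2)| < F}).ncard ≤ D.card := by
    have := Set.ncard_le_ncard hsub D.finite_toSet
    rwa [Set.ncard_coe_finset] at this
  have hcard2 : D.card ≤ ∑ b ∈ Finset.Icc 1 B, (Jset a F b).card := by
    refine le_trans Finset.card_biUnion_le ?_
    exact Finset.sum_le_sum (fun b _ => Finset.card_image_le)
  have hsum : ∑ b ∈ Finset.Icc 1 B, (F/(b:ℝ) + 2) = F * ((harmonic B : ℚ) : ℝ) + 2 * B := by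
    rw [Finset.sum_add_distrib, Finset.sum_const, Nat.card_Icc]
    have h1 : ∑ b ∈ Finset.Icc 1 B, F/(b:ℝ) = F * ∑ b ∈ Finset.Icc 1 B, ((b:ℝ))⁻¹ := by
      rw [Finset.mul_sum]
      exact Finset.sum_congr rfl (fun b _ => div_eq_mul_inv F _)
    have h2 : ((harmonic B : ℚ) : ℝ) = ∑ b ∈ Finset.Icc 1 B, ((b:ℝ))⁻¹ := by
      rw [harmonic_eq_sum_Icc]
      push_cast
      rfl
    have h3 : B + 1 - 1 = B := by omega
    rw [h1, ← h2, h3, nsmul_eq_mul]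
    ring
  have hharm : ((harmonic B : ℚ) : ℝ) ≤ 1 + Real.log B := harmonic_le_one_add_log B
  have hB1 : 1 ≤ B := by
    rw [hBdef]
    exact Nat.one_le_ceil_iff.mpr (Real.sqrt_pos.mpr (by linarith))
  have hBR1 : (1:ℝ) ≤ (B:ℝ) := by exact_mod_cast hB1
  have hsqrt2 : Real.sqrt 2 ≤ 1.5 := by
    nlinarith [Real.sq_sqrt (by norm_num : (0:ℝ) ≤ 2), Real.sqrt_nonneg 2]
  have hBub : (B:ℝ) ≤ Real.sqrt 2 * Real.sqrt a + 1 := by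
    have h1 : (B:ℝ) < Real.sqrt (2*a) + 1 := by
      rw [hBdef]
      exact Nat.ceil_lt_add_one (Real.sqrt_nonneg _)
    rw [Real.sqrt_mul (by norm_num : (0:ℝ) ≤ 2)] at h1
    linarith
  have hBle : (B:ℝ) ≤ 2 * Real.sqrt a := by
    nlinarith [Real.sqrt_nonneg a]
  have hlogB : Real.log B ≤ Real.log 2 + L/2 := by
    have h1 : Real.log (B:ℝ) ≤ Real.log (2 * Real.sqrt a) := by
      gcongr
    rwa [Real.log_mul (by norm_num) (by positivity), Real.log_sqrt ha0.le] at h1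
  have hlog2 : Real.log 2 ≤ 1 := by
    have := Real.log_le_sub_one_of_pos (by norm_num : (0:ℝ) < 2)
    linarith
  have hlog2' : (0:ℝ) ≤ Real.log 2 := Real.log_nonneg (by norm_num)
  have hpow : L ^ ((3:ℝ)/2) = L * Real.sqrt L := by
    rw [Real.sqrt_eq_rpow, show (3:ℝ)/2 = 1 + 1/2 by norm_num, Real.rpow_add hL0,
      Real.rpow_one]
  have hy2 : Real.sqrt L ^ 2 = L := Real.sq_sqrt hL0.le
  calc (({p : ℕ × ℕ | 0 < p.1 ∧ p.1 < p.2 ∧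
        |a - ((p.2 : ℝ) ^ 2 - (p.1 : ℝ) ^ 2)| < F}).ncard : ℝ)
      ≤ (D.card : ℝ) := by exact_mod_cast hcard1
    _ ≤ ∑ b ∈ Finset.Icc 1 B, ((Jset a F b).card : ℝ) := by exact_mod_cast hcard2
    _ ≤ ∑ b ∈ Finset.Icc 1 B, (F/(b:ℝ) + 2) :=
        Finset.sum_le_sum (fun b hb => Jset_card_le a hF0.le (Finset.mem_Icc.mp hb).1)
    _ = F * ((harmonic B : ℚ) : ℝ) + 2 * B := hsum
    _ ≤ F * (1 + Real.log B) + 2 * B := by nlinarith [hF0, hharm]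
    _ ≤ 10 * Real.sqrt a * L ^ ((3:ℝ)/2) := by
        rw [hpow, hFdef, hsa]
        nlinarith [hlogB, hBub, hsqrt2, hsa9, hsL9, hy2, hlog2, hlog2', hBle,
          Real.sqrt_nonneg a, Real.sqrt_nonneg L,
          mul_le_mul hsa9 hsL9 (by norm_num) (Real.sqrt_nonneg a),
          mul_nonneg (Real.sqrt_nonneg a) (Real.sqrt_nonneg L)]
end
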